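/- arXiv:2012.11770 — 2 statements merged into one kernel-verified Lean document; each statement's English description precedes it below -/
import Mathlib

section
/- Let p > 3 and 0 ≤ q < p be integers and let 1 ≤ ε ≤ ‖(p,q)‖/2 be a real number. If (r,s) is a pair of coprime positive integers with ‖(r,s)−(p,q)‖ ≤ ε, then setting t₀ = 1 − (B(r,s)·(r,s))/‖(r,s)‖², one has 0 < t₀ < 1 and ‖B(r,s) − (1−t₀)·(p,q)‖ < ε + 1. -/
open scoped InnerProductSpace

/-- The point (x,y) in the Euclidean plane. -/
noncomputable def V (x y : ℝ) : EuclideanSpace ℝ (Fin 2) := WithLp.toLp 2 ![x, y]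

/-!
Write `c = ⟪B, v⟫ / ‖v‖²` for `B = (a,b)` and `v = (r,s)`, so that `1 - t₀ = c` and `c • v` is the
orthogonal projection of `B` onto the line `ℝ v`. The bounds `0 < a ≤ r`, `0 ≤ b < s` give
`0 < ⟪B, v⟫ < ‖v‖²`, i.e. `0 < c < 1`. By Lagrange's identity the distance from `B` to that line is
`|a s - b r| / ‖v‖ = 1 / ‖v‖ < 1`. Finally `‖B - c • (p,q)‖ ≤ ‖B - c • v‖ + c ‖v - (p,q)‖ < 1 + ε`.
-/

lemma norm_V_sq (x y : ℝ) : ‖V x y‖ ^ 2 = x ^ 2 + y ^ 2 := by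
  rw [EuclideanSpace.norm_eq, Real.sq_sqrt (by positivity)]
  simp [V, Fin.sum_univ_two, sq_abs]

lemma inner_V (x y z w : ℝ) : ⟪V x y, V z w⟫_ℝ = x * z + y * w := by
  simp [V, PiLp.inner_apply, Fin.sum_univ_two, mul_comm]

lemma V_sub_smul_V (x y z w c : ℝ) : V x y - c • V z w = V (x - c * z) (y - c * w) := by
  ext i
  fin_cases i <;> simp [V]

/-- Lagrange's identity, read as the squared distance from `(x,y)` to the line `ℝ (z,w)`. -/
lemma norm_sub_inner_div_smul_V_sq (x y z w : ℝ) (hzw : z ^ 2 + w ^ 2 ≠ 0) :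
    ‖V x y - (⟪V x y, V z w⟫_ℝ / ‖V z w‖ ^ 2) • V z w‖ ^ 2 =
      (x * w - y * z) ^ 2 / (z ^ 2 + w ^ 2) := by
  rw [V_sub_smul_V, norm_V_sq, inner_V, norm_V_sq]
  field_simp
  ring

lemma inner_div_norm_sq_V_mem_Ioo {a b r s : ℝ} (ha : 0 < a) (har : a ≤ r) (hb : 0 ≤ b)
    (hbs : b < s) : ⟪V a b, V r s⟫_ℝ / ‖V r s‖ ^ 2 ∈ Set.Ioo 0 1 := by
  have hR : 0 < r ^ 2 + s ^ 2 := by nlinarith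
  rw [inner_V, norm_V_sq]
  constructor
  · exact div_pos (by nlinarith) hR
  · rw [div_lt_one hR]
    nlinarith

lemma norm_sub_inner_div_smul_V_lt_one_of_mul_sub_mul_eq_one {a b r s : ℤ} (hr : 0 < r)
    (hs : 0 < s) (hbez : a * s - b * r = 1) :
    ‖V a b - (⟪V a b, V r s⟫_ℝ / ‖V r s‖ ^ 2) • V r s‖ < 1 := by
  have hr1 : (1 : ℝ) ≤ r := by exact_mod_cast hr
  have hs1 : (1 : ℝ) ≤ s := by exact_mod_cast hs
  have hbez' : (a : ℝ) * s - b * r = 1 := by exact_mod_cast hbez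
  rw [← sq_lt_one_iff₀ (norm_nonneg _),
    norm_sub_inner_div_smul_V_sq _ _ _ _ (by positivity), hbez', div_lt_one (by positivity)]
  nlinarith

lemma norm_sub_smul_lt_of_norm_sub_smul_lt {E : Type*} [SeminormedAddCommGroup E]
    [NormedSpace ℝ E] {x v p : E} {c δ ε : ℝ} (hc0 : 0 ≤ c) (hc1 : c ≤ 1)
    (hx : ‖x - c • v‖ < δ) (hv : ‖v - p‖ ≤ ε) : ‖x - c • p‖ < ε + δ :=
  calc ‖x - c • p‖ = ‖(x - c • v) + c • (v - p)‖ := by rw [smul_sub, sub_add_sub_cancel]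
    _ ≤ ‖x - c • v‖ + ‖c • (v - p)‖ := norm_add_le _ _
    _ < δ + ε := by
      refine add_lt_add_of_lt_of_le hx ?_
      rw [norm_smul_of_nonneg hc0]
      nlinarith [norm_nonneg (v - p)]
    _ = ε + δ := by ring

theorem bezout_approx_alpha_general (p q r s a b : ℤ)
    (ε : ℝ)
    (hr : 0 < r) (hs : 0 < s)
    (ha : 0 < a) (har : a ≤ r) (hb : 0 ≤ b) (hbs : b < s)
    (hbez : a * s - b * r = 1)
    (hclose : ‖V (r : ℝ) (s : ℝ) - V (p : ℝ) (q : ℝ)‖ ≤ ε)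
    (t₀ : ℝ)
    (ht₀ : t₀ = 1 - ⟪V (a : ℝ) (b : ℝ), V (r : ℝ) (s : ℝ)⟫_ℝ / ‖V (r : ℝ) (s : ℝ)‖ ^ 2) :
    0 < t₀ ∧ t₀ < 1 ∧
      ‖V (a : ℝ) (b : ℝ) - (1 - t₀) • V (p : ℝ) (q : ℝ)‖ < ε + 1 := by
  obtain ⟨hc0, hc1⟩ := inner_div_norm_sq_V_mem_Ioo (a := a) (b := b) (r := r) (s := s)
    (by exact_mod_cast ha) (by exact_mod_cast har) (by exact_mod_cast hb) (by exact_mod_cast hbs)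
  rw [ht₀, sub_sub_cancel]
  exact ⟨by linarith, by linarith, norm_sub_smul_lt_of_norm_sub_smul_lt hc0.le hc1.le
    (norm_sub_inner_div_smul_V_lt_one_of_mul_sub_mul_eq_one hr hs hbez) hclose⟩

/-- with t₀ = 1 − (B(r,s)·(r,s))/‖(r,s)‖², one has 0 < t₀ < 1 and
‖B(r,s) − (1−t₀)·(p,q)‖ < ε + 1. Here (a,b) = B(r,s). -/
theorem bezout_approx_alpha (p q r s a b : ℤ) (hp : 3 < p) (hq0 : 0 ≤ q) (hqp : q < p)
    (ε : ℝ) (hε1 : 1 ≤ ε) (hε2 : ε ≤ ‖V (p : ℝ) (q : ℝ)‖ / 2)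
    (hr : 0 < r) (hs : 0 < s) (hrs : IsCoprime r s)
    (ha : 0 < a) (har : a ≤ r) (hb : 0 ≤ b) (hbs : b < s)
    (hbez : a * s - b * r = 1)
    (hclose : ‖V (r : ℝ) (s : ℝ) - V (p : ℝ) (q : ℝ)‖ ≤ ε)
    (t₀ : ℝ)
    (ht₀ : t₀ = 1 - ⟪V (a : ℝ) (b : ℝ), V (r : ℝ) (s : ℝ)⟫_ℝ / ‖V (r : ℝ) (s : ℝ)‖ ^ 2) :
    0 < t₀ ∧ t₀ < 1 ∧
      ‖V (a : ℝ) (b : ℝ) - (1 - t₀) • V (p : ℝ) (q : ℝ)‖ < ε + 1 :=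
  bezout_approx_alpha_general p q r s a b ε hr hs ha har hb hbs hbez hclose t₀ ht₀
end

section
/- Let p > 3 and 0 ≤ q < p be integers, and let 1 < ε ≤ ‖(p,q)‖/2 be a real number. If (r,s) is a pair of coprime positive integers with ‖(r,s)−(p,q)‖ ≤ ε − 1, then there exists t ∈ (0,1) such that ‖((1−t)·B(r,s) + t·B(s,r)) − ((1−t)²·(p,q) + t²·(q,p))‖ < ε. -/
lemma norm_V (x y : ℝ) : ‖V x y‖ = √(x ^ 2 + y ^ 2) := by
  simp [V, EuclideanSpace.norm_eq, Fin.sum_univ_two]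

lemma abs_le_norm_V (x y : ℝ) : |x| ≤ ‖V x y‖ := by
  rw [norm_V]
  exact Real.abs_le_sqrt (le_add_of_nonneg_right (sq_nonneg y))

lemma V_sub_V (x y x' y' : ℝ) : V x y - V x' y' = V (x - x') (y - y') := by
  ext i; fin_cases i <;> simp [V]

lemma norm_V_sub_V_swap (x y x' y' : ℝ) : ‖V y x - V y' x'‖ = ‖V x y - V x' y'‖ := by
  rw [V_sub_V, V_sub_V, norm_V, norm_V, add_comm]

lemma bezout_add_eq {r s a b c d : ℤ} (ha : 0 < a) (har : a ≤ r) (hd : 0 ≤ d) (hdr : d < r)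
    (hbez : a * s - b * r = 1) (hbez' : c * r - d * s = 1) : a + d = r ∧ b + c = s := by
  have hcop : IsCoprime r s := ⟨-b, a, by linarith⟩
  have hdvd : r ∣ a + d - r :=
    dvd_sub_self_right.2 (hcop.dvd_of_dvd_mul_right ⟨b + c, by linarith⟩)
  have had : a + d = r :=
    sub_eq_zero.1 (Int.eq_zero_of_abs_lt_dvd hdvd (abs_lt.2 ⟨by omega, by omega⟩))
  refine ⟨had, mul_left_cancel₀ (by omega : r ≠ 0) ?_⟩
  linear_combination hbez' - hbez + s * had

lemma norm_segment_sub_bezier_lt {E : Type*} [SeminormedAddCommGroup E] [NormedSpace ℝ E]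
    {A C R R' P Q : E} {t ε : ℝ} (ht0 : 0 < t) (ht1 : t < 1) (hε : 1 < ε)
    (hR : ‖(1 - t) • A + t • C - ((1 - t) ^ 2 • R + t ^ 2 • R')‖ ≤ 1)
    (hP : ‖R - P‖ ≤ ε - 1) (hQ : ‖R' - Q‖ ≤ ε - 1) :
    ‖(1 - t) • A + t • C - ((1 - t) ^ 2 • P + t ^ 2 • Q)‖ < ε := by
  have hsmul : ∀ (u : ℝ) (X : E), ‖X‖ ≤ ε - 1 → ‖u ^ 2 • X‖ ≤ u ^ 2 * (ε - 1) := fun u X hX => by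
    rw [norm_smul, Real.norm_of_nonneg (sq_nonneg u)]
    exact mul_le_mul_of_nonneg_left hX (sq_nonneg u)
  calc ‖(1 - t) • A + t • C - ((1 - t) ^ 2 • P + t ^ 2 • Q)‖
      = ‖((1 - t) • A + t • C - ((1 - t) ^ 2 • R + t ^ 2 • R'))
          + ((1 - t) ^ 2 • (R - P) + t ^ 2 • (R' - Q))‖ := by
        simp only [smul_sub]; abel_nf
    _ ≤ 1 + ((1 - t) ^ 2 * (ε - 1) + t ^ 2 * (ε - 1)) :=
        norm_add_le_of_le hR (norm_add_le_of_le (hsmul _ _ hP) (hsmul _ _ hQ))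
    _ < ε := by nlinarith [mul_pos ht0 (sub_pos.2 ht1)]

lemma segment_sub_bezier_eq {a b c d r s : ℝ} (hr : r ≠ 0) (had : a + d = r) (hbc : b + c = s)
    (hbez : a * s - b * r = 1) :
    (1 - d / r) • V a b + (d / r) • V c d - ((1 - d / r) ^ 2 • V r s + (d / r) ^ 2 • V s r)
      = V (d / r ^ 2) (-a / r ^ 2) := by
  obtain rfl : d = r - a := by linarith
  obtain rfl : c = s - b := by linarith
  ext i; fin_cases i
  · simp [V]; field_simp; linear_combination (r - a) * hbez
  · simp [V]; field_simp; linear_combination -a * hbez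

lemma norm_V_div_sq_le_one {a d r : ℝ} (ha : 0 ≤ a) (hd : 0 ≤ d) (had : a + d = r) (hr : 1 ≤ r) :
    ‖V (d / r ^ 2) (-a / r ^ 2)‖ ≤ 1 := by
  rw [norm_V, Real.sqrt_le_one, div_pow, div_pow, neg_sq, ← add_div, div_le_one (by positivity)]
  nlinarith [mul_nonneg ha hd, mul_le_mul_of_nonneg_left hr (by positivity : (0 : ℝ) ≤ r ^ 2)]

lemma exists_segment_near_bezier {a b c d r s : ℤ} {P Q : EuclideanSpace ℝ (Fin 2)} {ε : ℝ}
    (hε : 1 < ε) (ha : 0 < a) (hd : 0 < d) (had : a + d = r) (hbc : b + c = s)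
    (hbez : a * s - b * r = 1) (hP : ‖V r s - P‖ ≤ ε - 1) (hQ : ‖V s r - Q‖ ≤ ε - 1) :
    ∃ t : ℝ, 0 < t ∧ t < 1 ∧
      ‖((1 - t) • V a b + t • V c d) - ((1 - t) ^ 2 • P + t ^ 2 • Q)‖ < ε := by
  have hr : (1 : ℝ) ≤ r := by exact_mod_cast (by omega : 1 ≤ r)
  have hdr : (d : ℝ) < r := by exact_mod_cast (by omega : d < r)
  have had' : (a : ℝ) + d = r := by exact_mod_cast had
  have hbc' : (b : ℝ) + c = s := by exact_mod_cast hbc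
  have hbez' : (a : ℝ) * s - b * r = 1 := by exact_mod_cast hbez
  refine ⟨d / r, by positivity, (div_lt_one (by linarith)).2 hdr, ?_⟩
  refine norm_segment_sub_bezier_lt (by positivity) ((div_lt_one (by linarith)).2 hdr) hε ?_ hP hQ
  rw [segment_sub_bezier_eq (by linarith) had' hbc' hbez']
  exact norm_V_div_sq_le_one (by positivity) (by positivity) had' hr

lemma sub_one_lt_norm_V_one_one_sub {x y ε : ℝ} (hxy : 1 ≤ ‖V x y‖) (hε : ε ≤ ‖V x y‖ / 2) :
    ε - 1 < ‖V 1 1 - V x y‖ := by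
  have hV11 : ‖V 1 1‖ < 3 / 2 := by
    rw [norm_V, Real.sqrt_lt' (by norm_num)]; norm_num
  have := norm_sub_le (V 1 1 - V x y) (V 1 1)
  rw [sub_sub_cancel_left, norm_neg] at this
  linarith

theorem bezout_segment_approx_bezier_general (p q r s a b c d : ℤ)
    (hp : 3 < p)
    (ε : ℝ) (hε1 : 1 < ε) (hε2 : ε ≤ ‖V (p : ℝ) (q : ℝ)‖ / 2)
    (ha : 0 < a) (har : a ≤ r) (hb : 0 ≤ b)
    (hbez : a * s - b * r = 1)
    (hd : 0 ≤ d) (hdr : d < r)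
    (hbez' : c * r - d * s = 1)
    (hclose : ‖V (r : ℝ) (s : ℝ) - V (p : ℝ) (q : ℝ)‖ ≤ ε - 1) :
    ∃ t : ℝ, 0 < t ∧ t < 1 ∧
      ‖((1 - t) • V (a : ℝ) (b : ℝ) + t • V (c : ℝ) (d : ℝ)) -
          ((1 - t) ^ 2 • V (p : ℝ) (q : ℝ) + t ^ 2 • V (q : ℝ) (p : ℝ))‖ < ε := by
  obtain ⟨had, hbc⟩ := bezout_add_eq ha har hd hdr hbez hbez'
  have hclose' : ‖V (s : ℝ) (r : ℝ) - V (q : ℝ) (p : ℝ)‖ ≤ ε - 1 := by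
    rwa [norm_V_sub_V_swap]
  rcases hd.eq_or_lt with rfl | hd
  · have hr : r = 1 := Int.eq_one_of_mul_eq_one_right (b := s - b) (by omega)
      (by linear_combination hbez - s * had)
    subst hr
    obtain rfl : a = 1 := by omega
    obtain rfl : c = 1 := by simpa using hbez'
    rcases hb.eq_or_lt with rfl | hb
    · have hpq : 1 ≤ ‖V (p : ℝ) (q : ℝ)‖ :=
        ((by exact_mod_cast (by omega : 1 ≤ p) : (1 : ℝ) ≤ p).trans (le_abs_self _)).trans
          (abs_le_norm_V _ _)
      obtain rfl : s = 1 := by omega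
      exact absurd hclose (not_le.2 (by exact_mod_cast sub_one_lt_norm_V_one_one_sub hpq hε2))
    · obtain ⟨t, ht0, ht1, hlt⟩ := exists_segment_near_bezier (a := 1) (b := 0) (c := 1) (d := b)
        hε1 one_pos hb (by omega) (by omega) hbez' hclose' hclose
      refine ⟨1 - t, by linarith, by linarith, ?_⟩
      rwa [sub_sub_cancel, add_comm (t • _), add_comm (t ^ 2 • _)]
  · exact exists_segment_near_bezier hε1 ha hd had hbc hbez hclose hclose'

/-- the Bézier–Bézout segment of (r,s) comes within ε of the
quadratic Bézier curve for (p,q), (0,0), (q,p) at some parameter t ∈ (0,1).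
Here (a,b) = B(r,s) and (c,d) = B(s,r). -/
theorem bezout_segment_approx_bezier (p q r s a b c d : ℤ)
    (hp : 3 < p) (hq0 : 0 ≤ q) (hqp : q < p)
    (ε : ℝ) (hε1 : 1 < ε) (hε2 : ε ≤ ‖V (p : ℝ) (q : ℝ)‖ / 2)
    (hr : 0 < r) (hs : 0 < s) (hrs : IsCoprime r s)
    (ha : 0 < a) (har : a ≤ r) (hb : 0 ≤ b) (hbs : b < s)
    (hbez : a * s - b * r = 1)
    (hc : 0 < c) (hcs : c ≤ s) (hd : 0 ≤ d) (hdr : d < r)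
    (hbez' : c * r - d * s = 1)
    (hclose : ‖V (r : ℝ) (s : ℝ) - V (p : ℝ) (q : ℝ)‖ ≤ ε - 1) :
    ∃ t : ℝ, 0 < t ∧ t < 1 ∧
      ‖((1 - t) • V (a : ℝ) (b : ℝ) + t • V (c : ℝ) (d : ℝ)) -
          ((1 - t) ^ 2 • V (p : ℝ) (q : ℝ) + t ^ 2 • V (q : ℝ) (p : ℝ))‖ < ε :=
  bezout_segment_approx_bezier_general p q r s a b c d hp ε hε1 hε2 ha har hb hbez hd hdr hbez'
    hclose
end
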